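/- Let K be a finite index set, a ∈ ℕ, w₁,…,w_a ∈ ℚ^K, and t ∈ ℝ^K. Suppose that for all n₀, n₁ ∈ ℕ^K such that n₀·w_i = n₁·w_i for all i = 1,…,a, we have n₀·t = n₁·t. Then t lies in the real span of {w₁,…,w_a}. -/

import Mathlib

/-!
An integer relation `∑ mₖ wₖ = 0` among the columns `wₖ = (w₁ₖ, …, w_aₖ)` splits into natural
vectors `m = n₀ - n₁`, and a rational one becomes integral after clearing denominators, so the
hypothesis says that `x ↦ ∑ xₖ tₖ` vanishes on the kernel of `x ↦ ∑ xₖ wₖ` on `ℚ^K`. Hence it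
factors through a `ℚ`-linear map `g : ℚ^a → ℝ`, and `t = ∑ᵢ g(eᵢ) wᵢ`.
-/

open LinearMap in
theorem LinearMap.exists_comp_eq_of_ker_le {k V W M : Type*} [DivisionRing k]
    [AddCommGroup V] [Module k V] [AddCommGroup W] [Module k W] [AddCommGroup M] [Module k M]
    (f : V →ₗ[k] W) (F : V →ₗ[k] M) (h : ker f ≤ ker F) : ∃ g : W →ₗ[k] M, g ∘ₗ f = F := by
  obtain ⟨g, hg⟩ := exists_extend ((ker f).liftQ F h ∘ₗ f.quotKerEquivRange.symm.toLinearMap)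
  refine ⟨g, LinearMap.ext fun x => ?_⟩
  have hx : f.quotKerEquivRange.symm ⟨f x, mem_range_self f x⟩ = (ker f).mkQ x :=
    f.quotKerEquivRange.symm_apply_eq.mpr rfl
  simpa [hx] using congr($hg ⟨f x, mem_range_self f x⟩)

section

variable {ι : Type*} [Fintype ι]

theorem sum_zsmul_eq_sum_toNat_nsmul_sub {A : Type*} [AddCommGroup A] (m : ι → ℤ) (u : ι → A) :
    ∑ i, m i • u i = ∑ i, (m i).toNat • u i - ∑ i, (-m i).toNat • u i := by
  rw [← Finset.sum_sub_distrib]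
  congr! 1 with i
  rw [← natCast_zsmul, ← natCast_zsmul, ← sub_smul, Int.toNat_sub_toNat_neg]

variable {W M : Type*} [AddCommGroup W] [AddCommGroup M] {u : ι → W} {v : ι → M}

theorem sum_zsmul_eq_zero_of_sum_nsmul_eq
    (h : ∀ n₀ n₁ : ι → ℕ, ∑ i, n₀ i • u i = ∑ i, n₁ i • u i → ∑ i, n₀ i • v i = ∑ i, n₁ i • v i)
    (m : ι → ℤ) (hm : ∑ i, m i • u i = 0) : ∑ i, m i • v i = 0 := by
  rw [sum_zsmul_eq_sum_toNat_nsmul_sub, sub_eq_zero] at hm ⊢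
  exact h _ _ hm

theorem sum_zsmul_eq_smul_sum_qsmul {A : Type*} [AddCommGroup A] [Module ℚ A] {m : ι → ℤ}
    {x : ι → ℚ} {d : ℚ} (hm : ∀ i, (m i : ℚ) = d * x i) (y : ι → A) :
    ∑ i, m i • y i = d • ∑ i, x i • y i := by
  simp_rw [Finset.smul_sum, smul_smul, ← hm, Int.cast_smul_eq_zsmul]

variable [Module ℚ W] [Module ℚ M]

theorem sum_qsmul_eq_zero_of_sum_zsmul_eq_zero
    (h : ∀ m : ι → ℤ, ∑ i, m i • u i = 0 → ∑ i, m i • v i = 0)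
    (x : ι → ℚ) (hx : ∑ i, x i • u i = 0) : ∑ i, x i • v i = 0 := by
  obtain ⟨d, hd⟩ := IsLocalization.exist_integer_multiples_of_finite (nonZeroDivisors ℤ) x
  choose m hm using hd
  replace hm i : (m i : ℚ) = (d : ℤ) * x i := by simpa [zsmul_eq_mul] using hm i
  have hd0 : ((d : ℤ) : ℚ) ≠ 0 := Int.cast_ne_zero.mpr (nonZeroDivisors.coe_ne_zero d)
  have hv := h m (by rw [sum_zsmul_eq_smul_sum_qsmul hm, hx, smul_zero])
  rw [sum_zsmul_eq_smul_sum_qsmul hm, smul_eq_zero] at hv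
  exact hv.resolve_left hd0

theorem exists_linearMap_apply_eq_of_sum_nsmul_eq
    (h : ∀ n₀ n₁ : ι → ℕ, ∑ i, n₀ i • u i = ∑ i, n₁ i • u i → ∑ i, n₀ i • v i = ∑ i, n₁ i • v i) :
    ∃ g : W →ₗ[ℚ] M, ∀ i, g (u i) = v i := by
  classical
  obtain ⟨g, hg⟩ := (Fintype.linearCombination ℚ u).exists_comp_eq_of_ker_le
    (Fintype.linearCombination ℚ v) fun x hx => by
      simp only [LinearMap.mem_ker, Fintype.linearCombination_apply] at hx ⊢
      exact sum_qsmul_eq_zero_of_sum_zsmul_eq_zero (sum_zsmul_eq_zero_of_sum_nsmul_eq h) x hx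
  exact ⟨g, fun i => by simpa using congr($hg (Pi.single i 1))⟩

end

theorem mem_span_of_dotProduct_nat {K : Type*} [Fintype K] (a : ℕ)
    (w : Fin a → K → ℚ) (t : K → ℝ)
    (h : ∀ n₀ n₁ : K → ℕ,
      (∀ i : Fin a, ∑ k, (n₀ k : ℚ) * w i k = ∑ k, (n₁ k : ℚ) * w i k) →
      ∑ k, (n₀ k : ℝ) * t k = ∑ k, (n₁ k : ℝ) * t k) :
    t ∈ Submodule.span ℝ (Set.range fun i : Fin a => fun k => ((w i k : ℝ))) := by
  obtain ⟨g, hg⟩ := exists_linearMap_apply_eq_of_sum_nsmul_eq (u := fun k i => w i k) (v := t)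
    fun n₀ n₁ hn => by
      simp only [nsmul_eq_mul]
      refine h n₀ n₁ fun i => ?_
      simpa [Finset.sum_apply] using congr_fun hn i
  refine (Submodule.mem_span_range_iff_exists_fun ℝ).2
    ⟨fun i => g (Pi.single i 1), funext fun k => ?_⟩
  rw [← hg k, LinearMap.pi_apply_eq_sum_univ g]
  simp only [Finset.sum_apply, Pi.smul_apply, smul_eq_mul, Rat.smul_def, mul_comm]
  congr! 3 with i
  ext j
  simp only [Pi.single_apply, eq_comm]
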